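/- arXiv:1508.05363 — 5 statements merged into one kernel-verified Lean document; each statement's English description precedes it below -/
import Mathlib

section
/- With the Arnoux–Yoccoz interval exchange IE of genus g ≥ 2 and the renormalizing map ψ(s) = fract(α⁻¹ s + (α⁻¹ − 1)/2): for every s ∈ [0, α), if IE(s) ≥ α then ψ(s) = α⁻¹·IE(s) − 1. -/
/-- The partial sum `α + α² + ⋯ + α^k`.  The interval `J_k` of the Arnoux–Yoccoz
partition of `[0,1)` is `[aySum α (k-1), aySum α k)`. -/
noncomputable def aySum (α : ℝ) (k : ℕ) : ℝ := ∑ j ∈ Finset.Icc 1 k, α ^ j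

/-- The index `k ≥ 1` such that `t` lies in `J_k = [aySum α (k-1), aySum α k)`
(the least `k` with `t < aySum α k`). -/
noncomputable def ayIdx (α : ℝ) (t : ℝ) : ℕ := sInf {k : ℕ | t < aySum α k}

/-- The first involution `I₁`, rotating each interval `J_k` halfway around:
`I₁ t = t + α^k/2` if this value lies in `J_k`, and `t - α^k/2` otherwise,
where `k` is the index with `t ∈ J_k`. -/
noncomputable def ayI1 (α : ℝ) (t : ℝ) : ℝ :=
  if t + α ^ ayIdx α t / 2 ∈ Set.Ico (aySum α (ayIdx α t - 1)) (aySum α (ayIdx α t)) then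
    t + α ^ ayIdx α t / 2
  else
    t - α ^ ayIdx α t / 2

/-- The second involution `I₂ : t ↦ t + 1/2 (mod 1)`, rotating `[0,1)` halfway around. -/
noncomputable def ayI2 (t : ℝ) : ℝ := Int.fract (t + 1 / 2)

/-- The Arnoux–Yoccoz interval exchange transformation `IE = I₂ ∘ I₁` on `[0,1)`. -/
noncomputable def ayIE (α : ℝ) (t : ℝ) : ℝ := ayI2 (ayI1 α t)


/-- The renormalizing map `ψ(s) = α⁻¹ s + (α⁻¹ − 1)/2 (mod 1)`. -/
noncomputable def ayPsi (α : ℝ) (s : ℝ) : ℝ := Int.fract (α⁻¹ * s + (α⁻¹ - 1) / 2)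

/-!
On `J₁ = [0, α)` the involution `I₁` is the half-turn `s ↦ s ± α/2`, so `I₁ s` stays in
`[0, α)`. If `I₂` wrapped `I₁ s` around, the result `I₁ s - 1/2` would lie below `α`; hence
`IE s ≥ α` forces `IE s = I₁ s + 1/2 = s ± α/2 + 1/2`, and `α⁻¹ · IE s - 1` differs from the
argument of `ψ` by `0` or `1`. It lies in `[0, 1)` because `α ≤ IE s < 1 < 2α`, where `1/2 < α`
follows from `1 - α = (1 - α)(α + ⋯ + α^g) = α - α^(g+1)`.
-/

open Set

lemma one_half_lt_of_sum_pow_eq_one {α : ℝ} {g : ℕ} (hα : 0 < α)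
    (hsum : ∑ k ∈ Finset.Icc 1 g, α ^ k = 1) : 1 / 2 < α := by
  have h := geom_sum_Ico_mul α (Nat.le_add_left 1 g)
  rw [Finset.Ico_add_one_right_eq_Icc, hsum, pow_one] at h
  linarith [pow_pos hα (g + 1)]

section ArnouxYoccoz

variable {α s : ℝ}

@[simp] lemma aySum_zero : aySum α 0 = 0 := by simp [aySum]

@[simp] lemma aySum_one : aySum α 1 = α := by simp [aySum]

lemma ayIdx_eq_one (hs : s ∈ Ico 0 α) : ayIdx α s = 1 := by
  have hmem : 1 ∈ {k : ℕ | s < aySum α k} := by simpa using hs.2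
  refine le_antisymm (Nat.sInf_le hmem) (Nat.one_le_iff_ne_zero.2 fun h0 => ?_)
  rcases Nat.sInf_eq_zero.1 h0 with h | h
  · exact (not_lt.2 hs.1) (by simpa using h)
  · simp [h] at hmem

lemma ayI1_of_add_half_lt (hα : 0 < α) (hs : 0 ≤ s) (h : s + α / 2 < α) :
    ayI1 α s = s + α / 2 := by
  have hidx : ayIdx α s = 1 := ayIdx_eq_one ⟨hs, by linarith⟩
  have hlow : aySum α (1 - 1) ≤ s + α / 2 := by
    simp only [Nat.sub_self, aySum_zero]
    linarith
  rw [ayI1, hidx, pow_one, if_pos ⟨hlow, by simpa using h⟩]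

lemma ayI1_of_le_add_half (hs : s ∈ Ico 0 α) (h : α ≤ s + α / 2) :
    ayI1 α s = s - α / 2 := by
  rw [ayI1, ayIdx_eq_one hs, pow_one, if_neg fun hmem => (not_lt.2 h) (by simpa using hmem.2)]

lemma ayI1_mem_Ico (hs : s ∈ Ico 0 α) : ayI1 α s ∈ Ico 0 α := by
  have hα : 0 < α := hs.1.trans_lt hs.2
  rcases lt_or_ge (s + α / 2) α with h | h
  · rw [ayI1_of_add_half_lt hα hs.1 h]
    exact ⟨by linarith [hs.1], h⟩
  · rw [ayI1_of_le_add_half hs h]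
    exact ⟨by linarith, by linarith [hs.2]⟩

lemma ayI2_eq_add_half_of_le {t : ℝ} (ht : t ∈ Ico 0 α) (h : α ≤ ayI2 t) :
    ayI2 t = t + 1 / 2 := by
  have hα1 : α < 1 := h.trans_lt (Int.fract_lt_one _)
  rcases lt_or_ge (t + 1 / 2) 1 with h1 | h1
  · exact Int.fract_eq_self.2 ⟨by linarith [ht.1], h1⟩
  · have hwrap : ayI2 t = t - 1 / 2 :=
      Int.fract_eq_iff.2 ⟨by linarith, by linarith [ht.2], 1, by push_cast; ring⟩
    linarith [ht.2]

lemma ayIE_eq_ayI1_add_half (hs : s ∈ Ico 0 α) (hIE : α ≤ ayIE α s) :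
    ayIE α s = ayI1 α s + 1 / 2 :=
  ayI2_eq_add_half_of_le (ayI1_mem_Ico hs) hIE

end ArnouxYoccoz

theorem ayPsi_eq_of_alpha_le_ayIE_general (g : ℕ) (α : ℝ) (hα0 : 0 < α)
    (hsum : ∑ k ∈ Finset.Icc 1 g, α ^ k = 1)
    (s : ℝ) (hs : s ∈ Set.Ico (0 : ℝ) α) (hIE : α ≤ ayIE α s) :
    ayPsi α s = α⁻¹ * ayIE α s - 1 := by
  have hhalf := one_half_lt_of_sum_pow_eq_one hα0 hsum
  have hIE1 : ayIE α s < 1 := Int.fract_lt_one _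
  have hIE_eq := ayIE_eq_ayI1_add_half hs hIE
  rw [ayPsi, Int.fract_eq_iff]
  refine ⟨?_, ?_, ?_⟩
  · rw [sub_nonneg, le_inv_mul_iff₀ hα0, mul_one]
    exact hIE
  · rw [sub_lt_iff_lt_add, inv_mul_lt_iff₀ hα0]
    linarith
  · rcases lt_or_ge (s + α / 2) α with h | h
    · refine ⟨0, ?_⟩
      rw [hIE_eq, ayI1_of_add_half_lt hα0 hs.1 h]
      field_simp
      ring
    · refine ⟨1, ?_⟩
      rw [hIE_eq, ayI1_of_le_add_half hs h]
      field_simp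
      ring

/-- For `s ∈ [0, α)`, if `IE(s) ≥ α` then `ψ(s) = α⁻¹·IE(s) − 1`. -/
theorem ayPsi_eq_of_alpha_le_ayIE (g : ℕ) (hg : 2 ≤ g) (α : ℝ) (hα0 : 0 < α) (hα1 : α < 1)
    (hsum : ∑ k ∈ Finset.Icc 1 g, α ^ k = 1)
    (s : ℝ) (hs : s ∈ Set.Ico (0 : ℝ) α) (hIE : α ≤ ayIE α s) :
    ayPsi α s = α⁻¹ * ayIE α s - 1 :=
  ayPsi_eq_of_alpha_le_ayIE_general g α hα0 hsum s hs hIE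
end

section
/- For every integer n ≥ 2, the polynomial g(X) = X^n + X^{n−1} + ⋯ + X − 1 is irreducible over ℚ. -/
/-! The constant term of `g` is `-1`, so in a factorisation over `ℤ` both factors have constant
term `±1`, and a non-constant factor has a complex root in the closed unit disc: the product of its
roots has modulus `|b₀ / lc| ≤ 1`. But `g` has only one root there, counted with multiplicity. If
`g(w) = 0` and `|w| ≤ 1`, then `w ^ (n + 1) = 2 w - 1`, while `1 ≤ ∑ |w| ^ k` gives
`|w| ^ (n + 1) ≤ 2 |w| - 1`; so `|2 w - 1| ≤ 2 |w| - 1`, forcing `w = |w|`. Positive roots are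
unique by monotonicity and simple since `g' > 0` on `[0, ∞)`. Gauss's lemma passes from `ℤ` to
`ℚ`. -/

open Polynomial Finset

lemma Multiset.one_lt_prod_map_of_ne_zero {ι R : Type*} [CommMonoidWithZero R] [PartialOrder R]
    [ZeroLEOneClass R] [PosMulStrictMono R] [NeZero (1 : R)] {s : Multiset ι} (hs : s ≠ 0)
    {f : ι → R} (h : ∀ i ∈ s, 1 < f i) : 1 < (s.map f).prod := by
  simpa using Multiset.prod_map_lt_prod_map hs (fun _ ↦ 1) f (fun _ _ ↦ one_pos) h

theorem Polynomial.exists_mem_aroots_norm_le_one {b : ℤ[X]} (hb : 0 < b.natDegree)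
    (h0 : IsUnit (b.coeff 0)) : ∃ z ∈ b.aroots ℂ, ‖z‖ ≤ 1 := by
  by_contra! hroots
  set B := b.map (algebraMap ℤ ℂ)
  have hnatDegree : B.natDegree = b.natDegree :=
    natDegree_map_eq_of_injective (RingHom.injective_int _) b
  have hB0 : ‖B.coeff 0‖ = 1 := by
    rcases Int.isUnit_iff.mp h0 with h | h <;> simp [B, coeff_map, h]
  have hlead : 1 ≤ ‖B.leadingCoeff‖ := by
    rw [leadingCoeff_map_of_injective (RingHom.injective_int _), eq_intCast, Complex.norm_intCast]
    exact_mod_cast Int.one_le_abs (leadingCoeff_ne_zero.mpr (ne_zero_of_natDegree_gt hb))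
  have hprod : 1 < (B.roots.map (‖·‖)).prod :=
    Multiset.one_lt_prod_map_of_ne_zero (by
      rwa [← Multiset.card_pos, ← (IsAlgClosed.splits B).natDegree_eq_card_roots, hnatDegree])
      hroots
  have hvieta := congrArg norm (IsAlgClosed.splits B).coeff_zero_eq_leadingCoeff_mul_prod_roots
  rw [norm_mul, norm_mul, norm_pow, norm_neg, norm_one, one_pow, one_mul, hB0] at hvieta
  have hnormProd : ‖B.roots.prod‖ = (B.roots.map (‖·‖)).prod :=
    map_multiset_prod (normHom (α := ℂ)) _
  rw [hnormProd] at hvieta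
  nlinarith

theorem Polynomial.irreducible_of_card_filter_aroots_norm_le_one {p : ℤ[X]}
    (hp : 0 < p.natDegree) (h0 : IsUnit (p.coeff 0))
    (hroots : ((p.aroots ℂ).filter (‖·‖ ≤ 1)).card ≤ 1) : Irreducible p := by
  refine ⟨fun hunit ↦ hp.ne' (natDegree_eq_zero_of_isUnit hunit), fun a b hab ↦ ?_⟩
  have hab0 : IsUnit (a.coeff 0 * b.coeff 0) := by rwa [← mul_coeff_zero, ← hab]
  have hdisc : ∀ c : ℤ[X], IsUnit (c.coeff 0) → ¬IsUnit c →
      0 < ((c.aroots ℂ).filter (‖·‖ ≤ 1)).card := fun c hc0 hc ↦ by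
    have hdeg : 0 < c.natDegree := Nat.pos_of_ne_zero fun hdeg ↦
      hc (by rw [eq_C_of_natDegree_eq_zero hdeg]; exact isUnit_C.mpr hc0)
    obtain ⟨z, hz, hz1⟩ := exists_mem_aroots_norm_le_one hdeg hc0
    exact Multiset.card_pos_iff_exists_mem.mpr ⟨z, Multiset.mem_filter.mpr ⟨hz, hz1⟩⟩
  by_contra! hnot
  have ha := hdisc a (isUnit_of_mul_isUnit_left hab0) hnot.1
  have hb := hdisc b (isUnit_of_mul_isUnit_right hab0) hnot.2
  rw [hab, aroots_mul (hab ▸ ne_zero_of_natDegree_gt hp), Multiset.filter_add,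
    Multiset.card_add] at hroots
  omega

lemma geom_sum_Icc_one_mul {R : Type*} [Ring R] (x : R) (n : ℕ) :
    (∑ k ∈ Icc 1 n, x ^ k) * (x - 1) = x ^ (n + 1) - x := by
  rw [← Ico_add_one_right_eq_Icc, geom_sum_Ico_mul x (Nat.le_add_left 1 n), pow_one]

lemma geom_sum_Icc_strictMonoOn {n : ℕ} (hn : n ≠ 0) :
    StrictMonoOn (fun t : ℝ ↦ ∑ k ∈ Icc 1 n, t ^ k) (Set.Ici 0) := fun s hs t _ hst ↦
  sum_lt_sum_of_nonempty ⟨1, by simpa using Nat.one_le_iff_ne_zero.mpr hn⟩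
    fun k hk ↦ pow_lt_pow_left₀ hst hs (by grind)

lemma Complex.eq_norm_of_geom_sum_Icc_eq_one {w : ℂ} {n : ℕ} (hw : ∑ k ∈ Icc 1 n, w ^ k = 1)
    (hw1 : ‖w‖ ≤ 1) : w = ‖w‖ := by
  set t := ‖w‖
  have hpow : w ^ (n + 1) = 2 * w - 1 := by
    linear_combination -(geom_sum_Icc_one_mul w n) + (w - 1) * hw
  have hsum : 1 ≤ ∑ k ∈ Icc 1 n, t ^ k :=
    calc 1 = ‖∑ k ∈ Icc 1 n, w ^ k‖ := by rw [hw, norm_one]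
      _ ≤ ∑ k ∈ Icc 1 n, t ^ k := by simpa only [norm_pow] using norm_sum_le (Icc 1 n) (w ^ ·)
  have hpow_le : t ^ (n + 1) ≤ 2 * t - 1 := by
    nlinarith [geom_sum_Icc_one_mul t n, mul_nonneg (sub_nonneg.mpr hw1) (sub_nonneg.mpr hsum)]
  have hnormSq : ‖2 * w - 1‖ ^ 2 = (2 * w.re - 1) ^ 2 + (2 * w.im) ^ 2 := by
    rw [Complex.sq_norm, Complex.normSq_apply]
    simp only [Complex.sub_re, Complex.sub_im, Complex.mul_re, Complex.mul_im, Complex.one_re,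
      Complex.one_im, Complex.re_ofNat, Complex.im_ofNat]
    ring
  have ht_sq : t ^ 2 = w.re ^ 2 + w.im ^ 2 := by
    rw [Complex.sq_norm, Complex.normSq_apply]
    ring
  have hre : w.re = t := by
    have : ‖2 * w - 1‖ = t ^ (n + 1) := by rw [← hpow, norm_pow]
    nlinarith [norm_nonneg (2 * w - 1), Complex.re_le_norm w]
  apply Complex.ext
  · simpa using hre
  · simpa using (by nlinarith : w.im = 0)

noncomputable def geomSumSubOne (R : Type*) [CommRing R] (n : ℕ) : R[X] :=
  ∑ k ∈ Icc 1 n, X ^ k - 1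

section
variable {R S : Type*} [CommRing R] [CommRing S] {n : ℕ}

lemma map_geomSumSubOne (f : R →+* S) : (geomSumSubOne R n).map f = geomSumSubOne S n := by
  simp [geomSumSubOne, Polynomial.map_sum]

lemma eval_geomSumSubOne (x : R) : (geomSumSubOne R n).eval x = ∑ k ∈ Icc 1 n, x ^ k - 1 := by
  simp [geomSumSubOne, eval_finsetSum]

lemma coeff_zero_geomSumSubOne : (geomSumSubOne R n).coeff 0 = -1 := by
  rw [coeff_zero_eq_eval_zero, eval_geomSumSubOne,
    sum_eq_zero fun k hk ↦ zero_pow (by grind), zero_sub]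

lemma natDegree_geomSumSubOne_le : (geomSumSubOne R n).natDegree ≤ n := by
  refine (natDegree_sub_le _ _).trans (max_le ?_ (by simp))
  exact natDegree_sum_le_of_forall_le _ _ fun k hk ↦ (natDegree_X_pow_le k).trans (mem_Icc.mp hk).2

lemma coeff_geomSumSubOne_self (hn : n ≠ 0) : (geomSumSubOne R n).coeff n = 1 := by
  simp [geomSumSubOne, coeff_X_pow, coeff_one, hn, Nat.one_le_iff_ne_zero.mpr hn]

lemma monic_geomSumSubOne (hn : n ≠ 0) : (geomSumSubOne R n).Monic :=
  monic_of_natDegree_le_of_coeff_eq_one n natDegree_geomSumSubOne_le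
    (coeff_geomSumSubOne_self hn)

lemma natDegree_geomSumSubOne [Nontrivial R] (hn : n ≠ 0) :
    (geomSumSubOne R n).natDegree = n :=
  natDegree_eq_of_le_of_coeff_ne_zero natDegree_geomSumSubOne_le
    (by rw [coeff_geomSumSubOne_self hn]; exact one_ne_zero)

end

lemma eval_derivative_geomSumSubOne_ofReal_ne_zero {n : ℕ} (hn : n ≠ 0) {t : ℝ} (ht : 0 ≤ t) :
    (derivative (geomSumSubOne ℂ n)).eval (t : ℂ) ≠ 0 := by
  have hpos : 0 < ∑ k ∈ Icc 1 n, (k : ℝ) * t ^ (k - 1) :=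
    calc (0 : ℝ) < (1 : ℕ) * t ^ (1 - 1) := by norm_num
      _ ≤ ∑ k ∈ Icc 1 n, (k : ℝ) * t ^ (k - 1) :=
        single_le_sum (f := fun k : ℕ ↦ (k : ℝ) * t ^ (k - 1)) (fun k _ ↦ by positivity)
          (by simpa using Nat.one_le_iff_ne_zero.mpr hn)
  have heval : (derivative (geomSumSubOne ℂ n)).eval (t : ℂ) =
      ((∑ k ∈ Icc 1 n, (k : ℝ) * t ^ (k - 1) : ℝ) : ℂ) := by
    simp [geomSumSubOne, derivative_X_pow, eval_finsetSum]
  rw [heval]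
  exact_mod_cast hpos.ne'

lemma eq_norm_of_isRoot_geomSumSubOne {n : ℕ} {z : ℂ} (hz : (geomSumSubOne ℂ n).IsRoot z)
    (hz1 : ‖z‖ ≤ 1) : z = ‖z‖ ∧ ∑ k ∈ Icc 1 n, ‖z‖ ^ k = 1 := by
  have hsum : ∑ k ∈ Icc 1 n, z ^ k = 1 := by
    rwa [IsRoot, eval_geomSumSubOne, sub_eq_zero] at hz
  have hreal := Complex.eq_norm_of_geom_sum_Icc_eq_one hsum hz1
  refine ⟨hreal, ?_⟩
  have : ((∑ k ∈ Icc 1 n, ‖z‖ ^ k : ℝ) : ℂ) = 1 := by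
    push_cast
    rwa [← hreal]
  exact_mod_cast this

lemma card_filter_aroots_geomSumSubOne_le_one {n : ℕ} (hn : n ≠ 0) :
    (((geomSumSubOne ℤ n).aroots ℂ).filter (‖·‖ ≤ 1)).card ≤ 1 := by
  classical
  set g := geomSumSubOne ℂ n
  have hg : g ≠ 0 := (monic_geomSumSubOne hn).ne_zero
  rw [aroots_def, map_geomSumSubOne]
  set s := g.roots.filter (‖·‖ ≤ 1)
  rcases Multiset.empty_or_exists_mem s with hs | ⟨w, hw⟩
  · simp [hs]
  have hroot : ∀ z ∈ s, z = ‖z‖ ∧ ∑ k ∈ Icc 1 n, ‖z‖ ^ k = 1 := fun z hz ↦ by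
    obtain ⟨hz, hz1⟩ := Multiset.mem_filter.mp hz
    exact eq_norm_of_isRoot_geomSumSubOne (isRoot_of_mem_roots hz) hz1
  have hall : ∀ z ∈ s, w = z := fun z hz ↦ by
    obtain ⟨hw_eq, hw_sum⟩ := hroot w hw
    obtain ⟨hz_eq, hz_sum⟩ := hroot z hz
    calc w = ‖w‖ := hw_eq
      _ = ‖z‖ := by
        rw [(geom_sum_Icc_strictMonoOn hn).injOn (norm_nonneg w) (norm_nonneg z)
          (hw_sum.trans hz_sum.symm)]
      _ = z := hz_eq.symm
  have hsimple : g.rootMultiplicity w ≤ 1 := by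
    by_contra! hmult
    obtain ⟨-, hderiv⟩ := (one_lt_rootMultiplicity_iff_isRoot hg).mp hmult
    rw [(hroot w hw).1] at hderiv
    exact eval_derivative_geomSumSubOne_ofReal_ne_zero hn (norm_nonneg w) hderiv
  calc s.card = s.count w := (Multiset.count_eq_card.mpr hall).symm
    _ ≤ g.roots.count w := Multiset.count_le_of_le w (Multiset.filter_le _ _)
    _ = g.rootMultiplicity w := count_roots g
    _ ≤ 1 := hsimple

/-- For every integer `n ≥ 2`, the polynomial
`g(X) = X^n + X^{n−1} + ⋯ + X − 1` is irreducible over `ℚ`. -/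
theorem irreducible_geom_sum_sub_one (n : ℕ) (hn : 2 ≤ n) :
    Irreducible ((∑ k ∈ Finset.Icc 1 n, (X : ℚ[X]) ^ k) - 1) := by
  have hn0 : n ≠ 0 := by omega
  have hirr : Irreducible (geomSumSubOne ℤ n) :=
    irreducible_of_card_filter_aroots_norm_le_one
      (by rw [natDegree_geomSumSubOne hn0]; omega)
      (by rw [coeff_zero_geomSumSubOne]; exact isUnit_one.neg)
      (card_filter_aroots_geomSumSubOne_le_one hn0)
  rwa [IsPrimitive.Int.irreducible_iff_irreducible_map_cast (monic_geomSumSubOne hn0).isPrimitive,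
    map_geomSumSubOne] at hirr
end

section
/- Cardinality bound for inverse limits of finite sets: let I be a directed partial order, let (A_i)_{i∈I} be a family of finite sets, and for each pair i ≤ j let τ_{ij} : A_j → A_i be maps satisfying τ_{ii} = id and τ_{ik} = τ_{ij} ∘ τ_{jk} whenever i ≤ j ≤ k. Let L = { x ∈ ∏_{i∈I} A_i : τ_{ij}(x_j) = x_i for all i ≤ j } be the inverse limit. Then for every natural number m, if liminf over the atTop filter of I of the function i ↦ card(A_i) is at most m, the set L is finite and has at most m elements. -/
/-!
Two distinct threads `x ≠ y` of an inverse system differ at some index `i`, hence at every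
`j ≥ i`, since `x i` and `y i` are the images of `x j` and `y j`. So a finite set of threads
injects into `A j` for all large `j`, and its size is at most the `liminf` of `card (A j)`.
Bounding every finite set of threads by `m` bounds the whole inverse limit.
-/

open Filter

theorem Set.finite_and_ncard_le_of_forall_finite_subset {α : Type*} {s : Set α} {m : ℕ}
    (h : ∀ t ⊆ s, t.Finite → t.ncard ≤ m) : s.Finite ∧ s.ncard ≤ m := by
  have hfin : s.Finite := by
    by_contra hinf
    obtain ⟨t, hts, htfin, htcard⟩ := Set.Infinite.exists_subset_ncard_eq hinf (m + 1)
    have := h t hts htfin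
    omega
  exact ⟨hfin, h s subset_rfl hfin⟩

section InverseLimit

variable {I : Type*} [Preorder I] {A : I → Type*}

def inverseLimit (τ : ∀ ⦃i j : I⦄, i ≤ j → A j → A i) : Set (∀ i, A i) :=
  {x | ∀ ⦃i j : I⦄ (h : i ≤ j), τ h (x j) = x i}

variable {τ : ∀ ⦃i j : I⦄, i ≤ j → A j → A i}

theorem inverseLimit.ne_of_le {x y : ∀ i, A i} (hx : x ∈ inverseLimit τ)
    (hy : y ∈ inverseLimit τ) {i j : I} (hij : i ≤ j) (hne : x i ≠ y i) : x j ≠ y j := by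
  intro heq
  apply hne
  rw [← hx hij, ← hy hij, heq]

theorem inverseLimit.eventually_injOn_eval {s : Set (∀ i, A i)} (hs : s.Finite)
    (hsL : s ⊆ inverseLimit τ) : ∀ᶠ j in atTop, Set.InjOn (fun x => x j) s := by
  have hpairs : ∀ p ∈ s ×ˢ s, ∀ᶠ j in atTop, p.1 j = p.2 j → p.1 = p.2 := by
    rintro ⟨x, y⟩ ⟨hx, hy⟩
    by_cases hxy : x = y
    · exact Eventually.of_forall fun _ _ => hxy
    obtain ⟨i, hi⟩ := Function.ne_iff.mp hxy
    filter_upwards [eventually_ge_atTop i] with j hij heq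
    exact absurd heq (inverseLimit.ne_of_le (hsL hx) (hsL hy) hij hi)
  filter_upwards [(eventually_all_finite (hs.prod hs)).mpr hpairs] with j hj x hx y hy heq
  exact hj (x, y) ⟨hx, hy⟩ heq

theorem inverseLimit.ncard_le_liminf [∀ i, Finite (A i)] {s : Set (∀ i, A i)} (hs : s.Finite)
    (hsL : s ⊆ inverseLimit τ) :
    (s.ncard : ENNReal) ≤ liminf (fun i => (Nat.card (A i) : ENNReal)) atTop := by
  refine le_liminf_of_le (by isBoundedDefault) ?_
  filter_upwards [eventually_injOn_eval hs hsL] with j hj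
  calc (s.ncard : ENNReal) ≤ (Set.univ : Set (A j)).ncard :=
        Nat.cast_le.mpr (Set.ncard_le_ncard_of_injOn _ (fun _ _ => Set.mem_univ _) hj)
    _ = Nat.card (A j) := by rw [Set.ncard_univ]

end InverseLimit

theorem inverseLimit_finite_card_le_general {I : Type*} [PartialOrder I]
    (A : I → Type*) [∀ i, Finite (A i)]
    (τ : ∀ ⦃i j : I⦄, i ≤ j → A j → A i)
    (m : ℕ)
    (hlim : liminf (fun i => (Nat.card (A i) : ENNReal)) atTop ≤ (m : ENNReal)) :
    {x : ∀ i, A i | ∀ ⦃i j : I⦄ (h : i ≤ j), τ h (x j) = x i}.Finite ∧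
      {x : ∀ i, A i | ∀ ⦃i j : I⦄ (h : i ≤ j), τ h (x j) = x i}.ncard ≤ m :=
  Set.finite_and_ncard_le_of_forall_finite_subset fun _ hsL hs =>
    Nat.cast_le.mp ((inverseLimit.ncard_le_liminf (τ := τ) hs hsL).trans hlim)

/-- Cardinality bound for inverse limits of finite sets: if `(A_i)_{i ∈ I}` is an
inverse system of finite sets over a directed partial order `I` with transition maps
`τ_{ij} : A_j → A_i` (for `i ≤ j`) satisfying `τ_{ii} = id` and
`τ_{ik} = τ_{ij} ∘ τ_{jk}`, and the `liminf` along `atTop` of `i ↦ card (A_i)`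
(in `[0,∞]`) is at most `m`, then the inverse limit is finite with at most `m`
elements. -/
theorem inverseLimit_finite_card_le {I : Type*} [PartialOrder I] [Nonempty I]
    [IsDirected I (· ≤ ·)]
    (A : I → Type*) [∀ i, Finite (A i)]
    (τ : ∀ ⦃i j : I⦄, i ≤ j → A j → A i)
    (hτ_id : ∀ (i : I) (a : A i), τ (le_refl i) a = a)
    (hτ_comp : ∀ ⦃i j k : I⦄ (hij : i ≤ j) (hjk : j ≤ k) (a : A k),
      τ hij (τ hjk a) = τ (le_trans hij hjk) a)
    (m : ℕ)
    (hlim : liminf (fun i => (Nat.card (A i) : ENNReal)) atTop ≤ (m : ENNReal)) :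
    {x : ∀ i, A i | ∀ ⦃i j : I⦄ (h : i ≤ j), τ h (x j) = x i}.Finite ∧
      {x : ∀ i, A i | ∀ ⦃i j : I⦄ (h : i ≤ j), τ h (x j) = x i}.ncard ≤ m :=
  inverseLimit_finite_card_le_general A τ m hlim
end

section
/- Bound on totally-K subextensions (perfect-field case of the main appendix theorem): let E be a perfect field with algebraic closure Ē, let K and F be intermediate fields of Ē/E, and let p be a prime such that p does not divide [F₀ : E] for any finite-dimensional intermediate field F₀ of Ē/E contained in F. Suppose the Galois group Aut(Ē/K) = (Ē ≃ₐ[K] Ē), with its Krull topology, is pro-p, in the sense that every quotient by an open normal subgroup is a p-group. Then for every finite-dimensional intermediate field L of Ē/E with L ≤ F which is totally-K (every E-algebra homomorphism L → Ē has image contained in K), one has, in [0,∞]: [L : E] ≤ liminf, over the directed partial order (under inclusion, with its atTop filter) of finite-dimensional intermediate fields F₀ of Ē/E contained in F, of the number of E-algebra homomorphisms from F₀ to K. -/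
/-!
Every `σ : L →ₐ[E] Ē` has `[F₀ : L]` extensions to `F₀ ⊇ L`, a divisor of `[F₀ : E]` and hence
prime to `p`. Since `σ` is `K`-valued, `Aut(Ē/K)` permutes these extensions, through a finite
quotient which is a `p`-group, so one extension is fixed and hence takes values in `K`. Distinct `σ`
have distinct extensions, so `[L : E] = #Hom(L, Ē) ≤ #Hom(F₀, K)` for all `F₀ ⊇ L`, which is
eventually along the directed family.
-/

open Filter

def IsProPGroup (p : ℕ) (G : Type*) [Group G] [TopologicalSpace G] : Prop :=
  ∀ (N : Subgroup G) [N.Normal], IsOpen (N : Set G) → IsPGroup p (G ⧸ N)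

section FixedPoint

variable {p : ℕ} {G X : Type*} [Group G] [TopologicalSpace G] [MulAction G X]

theorem IsProPGroup.exists_forall_smul_eq [Fact p.Prime] [Finite X] (hG : IsProPGroup p G)
    (hX : ∀ x : X, IsOpen (MulAction.stabilizer G x : Set G)) (hcard : ¬ p ∣ Nat.card X) :
    ∃ x : X, ∀ g : G, g • x = x := by
  let φ := MulAction.toPermHom G X
  have hker : (φ.ker : Set G) = ⋂ x : X, (MulAction.stabilizer G x : Set G) := by
    ext g
    simp [φ, Equiv.ext_iff, eq_comm]
  have hrange : IsPGroup p φ.range :=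
    (hG φ.ker (hker ▸ isOpen_iInter_of_finite hX)).of_equiv
      (QuotientGroup.quotientKerEquivRange φ)
  obtain ⟨x, hx⟩ := hrange.nonempty_fixed_point_of_prime_not_dvd_card X hcard
  exact ⟨x, fun g => hx ⟨φ g, g, rfl⟩⟩

end FixedPoint

theorem AlgHom.natCard_extensions_dvd_finrank {E A B C : Type*} [Field E] [Field A] [Field B]
    [Field C] [Algebra E A] [Algebra E B] [Algebra E C] [IsAlgClosed C]
    [Algebra.IsSeparable E B] [FiniteDimensional E B] (i : A →ₐ[E] B) (σ : A →ₐ[E] C) :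
    Nat.card {τ : B →ₐ[E] C // τ.comp i = σ} ∣ Module.finrank E B := by
  let : Algebra A B := i.toAlgebra
  let : Algebra A C := σ.toAlgebra
  have : IsScalarTower E A B := .of_algebraMap_eq fun a => (i.commutes a).symm
  have : IsScalarTower E A C := .of_algebraMap_eq fun a => (σ.commutes a).symm
  have : FiniteDimensional A B := .right E A B
  have : Algebra.IsSeparable A B := Algebra.isSeparable_tower_top_of_isSeparable E A B
  let e : {τ : B →ₐ[E] C // τ.comp i = σ} ≃ (B →ₐ[A] C) :=
    { toFun τ := { τ.1 with commutes' a := AlgHom.congr_fun τ.2 a }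
      invFun ρ := ⟨ρ.restrictScalars E, AlgHom.ext ρ.commutes⟩
      left_inv _ := rfl
      right_inv _ := rfl }
  rw [Nat.card_congr e, AlgHom.natCard_of_splits A B C fun _ => IsAlgClosed.splits _]
  exact Dvd.intro_left _ (Module.finrank_mul_finrank E A B)

section AutAction

variable {E Ω : Type*} [Field E] [Field Ω] [Algebra E Ω] (K : IntermediateField E Ω)
  {A B : Type*} [CommRing A] [CommRing B] [Algebra E A] [Algebra E B]

instance : MulAction (Ω ≃ₐ[K] Ω) (B →ₐ[E] Ω) where
  smul g τ := (g.restrictScalars E : Ω →ₐ[E] Ω).comp τ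
  one_smul _ := rfl
  mul_smul _ _ _ := rfl

def AlgHom.extensionsSubMulAction (i : A →ₐ[E] B) (σ : A →ₐ[E] Ω) (hσ : ∀ a, σ a ∈ K) :
    SubMulAction (Ω ≃ₐ[K] Ω) (B →ₐ[E] Ω) where
  carrier := {τ | τ.comp i = σ}
  smul_mem' g τ (hτ : τ.comp i = σ) := by
    ext a
    change g (τ (i a)) = σ a
    rw [← AlgHom.comp_apply τ i, hτ]
    exact g.commutes ⟨σ a, hσ a⟩

theorem isOpen_stabilizer_algHom [Algebra.IsAlgebraic E Ω] [Algebra.FiniteType E B]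
    (τ : B →ₐ[E] Ω) : IsOpen (MulAction.stabilizer (Ω ≃ₐ[K] Ω) τ : Set (Ω ≃ₐ[K] Ω)) := by
  obtain ⟨t, ht⟩ := Algebra.FiniteType.out (R := E) (A := B)
  let M := IntermediateField.adjoin K (τ '' t)
  have : FiniteDimensional K M := IntermediateField.finiteDimensional_adjoin fun x _ =>
    Algebra.IsIntegral.isIntegral x
  refine Subgroup.isOpen_mono (fun g hg => ?_) M.fixingSubgroup_isOpen
  refine AlgHom.ext_of_adjoin_eq_top ht fun b hb => ?_
  exact hg ⟨τ b, IntermediateField.subset_adjoin K _ (Set.mem_image_of_mem τ hb)⟩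

end AutAction

section ProPExtension

variable {E Ω : Type*} [Field E] [Field Ω] [Algebra E Ω] (K : IntermediateField E Ω)
  {A B : Type*} [Field A] [Field B] [Algebra E A] [Algebra E B] [FiniteDimensional E B]
  {p : ℕ} [Fact p.Prime] [IsAlgClosure E Ω] [PerfectField E]

theorem IntermediateField.exists_algHom_comp_eq_of_isProPGroup
    (hK : IsProPGroup p (Ω ≃ₐ[K] Ω)) (hB : ¬ p ∣ Module.finrank E B) (i : A →ₐ[E] B)
    (σ : A →ₐ[E] Ω) (hσ : ∀ a, σ a ∈ K) :
    ∃ τ : B →ₐ[E] K, (K.val.comp τ).comp i = σ := by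
  have := IsAlgClosure.isAlgClosed E (K := Ω)
  have := IsAlgClosure.isAlgebraic (R := E) (K := Ω)
  let X := AlgHom.extensionsSubMulAction K i σ hσ
  have hX : ¬ p ∣ Nat.card X := fun h => hB (h.trans (AlgHom.natCard_extensions_dvd_finrank i σ))
  obtain ⟨⟨τ, hτ⟩, hfix⟩ := hK.exists_forall_smul_eq
    (fun τ => (SubMulAction.stabilizer_of_subMul τ).symm ▸ isOpen_stabilizer_algHom K τ.1) hX
  have hτK (b : B) : τ b ∈ K := by
    simpa using (InfiniteGalois.mem_range_algebraMap_iff_fixed (k := K) (τ b)).2 fun g =>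
      AlgHom.congr_fun (congrArg Subtype.val (hfix g)) b
  exact ⟨τ.codRestrict K.toSubalgebra hτK, hτ⟩

theorem IntermediateField.natCard_algHom_le_of_forall_mem
    (hK : IsProPGroup p (Ω ≃ₐ[K] Ω)) (hB : ¬ p ∣ Module.finrank E B) (i : A →ₐ[E] B)
    (hA : ∀ σ : A →ₐ[E] Ω, ∀ a, σ a ∈ K) :
    Nat.card (A →ₐ[E] Ω) ≤ Nat.card (B →ₐ[E] K) := by
  choose f hf using fun σ => K.exists_algHom_comp_eq_of_isProPGroup hK hB i σ (hA σ)
  refine Nat.card_le_card_of_injective f fun σ₁ σ₂ h => ?_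
  rw [← hf σ₁, ← hf σ₂, h]

end ProPExtension

/-- Bound on totally-`K` subextensions (perfect-field case of the main appendix
theorem): let `E` be a perfect field with algebraic closure `Ē`, `K, F` intermediate
fields of `Ē/E`, and `p` a prime not dividing `[F₀ : E]` for any finite-dimensional
intermediate field `F₀ ≤ F`.  If the Galois group `Aut(Ē/K)` with its Krull topology
is pro-`p`, then for every finite-dimensional totally-`K` intermediate field `L ≤ F`,
in `[0,∞]`, `[L : E]` is at most the `liminf`, over the directed partial order of
finite-dimensional intermediate fields `F₀ ≤ F` (with its `atTop` filter), of the
number of `E`-algebra homomorphisms `F₀ → K`. -/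
theorem totallyK_subextension_liminf_bound
    {E Ebar : Type*} [Field E] [Field Ebar] [Algebra E Ebar]
    [IsAlgClosure E Ebar] [PerfectField E]
    (K F : IntermediateField E Ebar)
    (p : ℕ) (hp : p.Prime)
    (hpdeg : ∀ F₀ : IntermediateField E Ebar, F₀ ≤ F → FiniteDimensional E ↥F₀ →
      ¬ p ∣ Module.finrank E ↥F₀)
    (hpro : ∀ (N : Subgroup (Ebar ≃ₐ[↥K] Ebar)) [N.Normal],
      IsOpen (N : Set (Ebar ≃ₐ[↥K] Ebar)) → IsPGroup p ((Ebar ≃ₐ[↥K] Ebar) ⧸ N))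
    (L : IntermediateField E Ebar) (hLF : L ≤ F) [FiniteDimensional E ↥L]
    (hL : ∀ σ : ↥L →ₐ[E] Ebar, ∀ x : ↥L, σ x ∈ K) :
    (Module.finrank E ↥L : ENNReal) ≤
      liminf
        (fun F₀ : {F₀ : IntermediateField E Ebar // F₀ ≤ F ∧ FiniteDimensional E ↥F₀} =>
          (Nat.card (↥F₀.1 →ₐ[E] ↥K) : ENNReal))
        atTop := by
  have : Fact p.Prime := ⟨hp⟩
  have := IsAlgClosure.isAlgClosed E (K := Ebar)
  have hLcard : Nat.card (L →ₐ[E] Ebar) = Module.finrank E L :=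
    AlgHom.natCard_of_splits E L Ebar fun _ => IsAlgClosed.splits _
  refine le_liminf_of_le (by isBoundedDefault) ?_
  filter_upwards [eventually_ge_atTop ⟨L, hLF, ‹_›⟩] with ⟨F₀, hF₀F, hF₀⟩ (hLF₀ : L ≤ F₀)
  rw [← hLcard]
  exact_mod_cast K.natCard_algHom_le_of_forall_mem hpro (hpdeg F₀ hF₀F hF₀)
    (IntermediateField.inclusion hLF₀) hL
end

section
/- Let g(X) ∈ ℚ[X] be an irreducible polynomial of odd degree, and let F = ℚ[X]/(g(X)). Then every totally real subfield L of F (every ring homomorphism L → ℂ has image contained in ℝ) satisfies [L : ℚ] ≤ r, where r is the number of distinct real roots of g. -/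
/-!
Above a real place `v` of `L` lie `u` unramified places of `F`, which are real, and `r` ramified
ones, with `u + 2r = [F : L]`. This degree is odd, so `u > 0` and `v` extends to a real place of
`F`; such extensions restrict back to `v`, so for totally real `L` we get
`[L : ℚ] = #{real places of L} ≤ #{real places of F}`. The real places of `F = ℚ[X]/(g)` are its
embeddings into `ℝ`, which correspond to the real roots of `g`.
-/

open Polynomial Module NumberField NumberField.InfinitePlace

namespace NumberField

theorem isTotallyReal_of_forall_mem_range_ofReal {K : Type*} [Field K]
    (h : ∀ φ : K →+* ℂ, ∀ x, φ x ∈ Set.range ((↑) : ℝ → ℂ)) : IsTotallyReal K where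
  isReal v := by
    rw [isReal_iff, ComplexEmbedding.isReal_iff]
    ext x
    obtain ⟨r, hr⟩ := h v.embedding x
    simp [← hr]

def ComplexEmbedding.isRealEquiv (K : Type*) [Field K] :
    {φ : K →+* ℂ // ComplexEmbedding.IsReal φ} ≃ (K →+* ℝ) where
  toFun φ := φ.2.embedding
  invFun ψ := ⟨Complex.ofRealHom.comp ψ, by ext; simp⟩
  left_inv φ := Subtype.ext <| RingHom.ext φ.2.coe_embedding_apply
  right_inv ψ := by ext; simp [ComplexEmbedding.IsReal.embedding]

namespace InfinitePlace

theorem nrRealPlaces_eq_natCard_ringHom (K : Type*) [Field K] [NumberField K] :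
    nrRealPlaces K = Nat.card (K →+* ℝ) := by
  classical
  rw [← card_real_embeddings, ← Nat.card_eq_fintype_card,
    Nat.card_congr (ComplexEmbedding.isRealEquiv K)]

variable {K L : Type*} [Field K] [Field L] [NumberField K] [NumberField L] [Algebra K L]

theorem exists_isReal_comap_eq_of_odd_finrank (h : Odd (finrank K L)) {v : InfinitePlace K}
    (hv : v.IsReal) : ∃ w : InfinitePlace L, w.IsReal ∧ w.comap (algebraMap K L) = v := by
  obtain ⟨w, hwv, hw⟩ : (unramifiedPlacesOver L v).Nonempty := by
    refine Set.nonempty_of_ncard_ne_zero fun h0 ↦ Nat.not_even_iff_odd.mpr h ?_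
    rw [← unramifedPlacesOver_ncard_add_eq_finrank L v, h0, zero_add]
    exact even_two_mul _
  have : w.LiesOver v := hwv
  exact ⟨w, hw.liesOver_isReal_over w v hv, LiesOver.comap_eq w v⟩

theorem nrRealPlaces_le_of_odd_finrank (h : Odd (finrank K L)) :
    nrRealPlaces K ≤ nrRealPlaces L := by
  classical
  choose w hw hwv using fun v : {v : InfinitePlace K // v.IsReal} ↦
    exists_isReal_comap_eq_of_odd_finrank h v.2
  refine Fintype.card_le_of_injective (fun v ↦ ⟨w v, hw v⟩) fun v₁ v₂ h12 ↦ ?_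
  have hw12 : w v₁ = w v₂ := congrArg Subtype.val h12
  exact Subtype.ext <| by rw [← hwv v₁, ← hwv v₂, hw12]

end InfinitePlace

end NumberField

theorem AdjoinRoot.natCard_algHom_eq_ncard {F L : Type*} [Field F] [CommRing L] [IsDomain L]
    [Algebra F L] {f : F[X]} (hf : f ≠ 0) :
    Nat.card (AdjoinRoot f →ₐ[F] L) = {x : L | aeval x f = 0}.ncard := by
  rw [Nat.card_congr (AdjoinRoot.equiv L F f hf), ← Nat.card_coe_set_eq]
  exact Nat.card_congr <| Equiv.subtypeEquivRight fun x ↦ by simp [hf]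

/-- Let `g ∈ ℚ[X]` be irreducible of odd degree and `F = ℚ[X]/(g)`.  Then every
totally real subfield `L` of `F` (every ring homomorphism `L → ℂ` has image contained
in `ℝ`) satisfies `[L : ℚ] ≤ r`, where `r` is the number of distinct real roots
of `g`. -/
theorem totallyReal_subfield_card_le_real_roots
    (g : Polynomial ℚ) [Fact (Irreducible g)] (hodd : Odd g.natDegree)
    (L : IntermediateField ℚ (AdjoinRoot g))
    (hL : ∀ σ : ↥L →+* ℂ, ∀ x : ↥L, σ x ∈ Set.range ((↑) : ℝ → ℂ)) :
    Module.finrank ℚ ↥L ≤ Set.ncard {x : ℝ | Polynomial.aeval x g = 0} := by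
  have hg : g ≠ 0 := (Fact.out : Irreducible g).ne_zero
  have : IsTotallyReal L := isTotallyReal_of_forall_mem_range_ofReal hL
  have hodd_ext : Odd (finrank L (AdjoinRoot g)) := by
    have hdeg : finrank ℚ (AdjoinRoot g) = g.natDegree := finrank_quotient_span_eq_natDegree
    rw [← hdeg, ← finrank_mul_finrank ℚ L] at hodd
    exact (Nat.odd_mul.mp hodd).2
  calc finrank ℚ L = nrRealPlaces L := IsTotallyReal.finrank L
    _ ≤ nrRealPlaces (AdjoinRoot g) := nrRealPlaces_le_of_odd_finrank hodd_ext
    _ = Nat.card (AdjoinRoot g →ₐ[ℚ] ℝ) := by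
      rw [nrRealPlaces_eq_natCard_ringHom, Nat.card_congr (RingHom.equivRatAlgHom _ _)]
    _ = Set.ncard {x : ℝ | Polynomial.aeval x g = 0} := AdjoinRoot.natCard_algHom_eq_ncard hg
end
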